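/- arXiv:2111.13807 — 2 statements merged into one kernel-verified Lean document; each statement's English description precedes it below -/
import Mathlib

section
/- Let λ ≥ max{1, B²} and let φ₁, …, φₙ ∈ ℝ^p be vectors with ‖φᵢ‖₂ ≤ B for all i. Define Λ₀ = λI and Λₜ = Λₜ₋₁ + φₜφₜᵀ. Then Σ_{t=1}^n ‖φₜ‖²_{Λₜ₋₁⁻¹} ≤ 2 log(det(Λₙ)/det(λI)). -/
/-!
Each rank-one update multiplies the determinant by `1 + xₜ`, where `xₜ = ‖φₜ‖²_{Λₜ₋₁⁻¹}`
(matrix determinant lemma), so `log (det Λₙ / det (λI)) = Σₜ log (1 + xₜ)`. Since `Λₜ₋₁ ≥ λI` and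
`‖φₜ‖² ≤ B² ≤ λ`, each `xₜ` lies in `[0, 1]`, where `x ≤ 2 log (1 + x)`.
-/

open Matrix

/-- The regularized empirical covariance matrix `Λₜ = λI + Σ_{i<t} φᵢφᵢᵀ`. -/
noncomputable def covMat {p : ℕ} (lam : ℝ) (φ : ℕ → Fin p → ℝ) (t : ℕ) :
    Matrix (Fin p) (Fin p) ℝ :=
  lam • (1 : Matrix (Fin p) (Fin p) ℝ) +
    ∑ i ∈ Finset.range t, Matrix.vecMulVec (φ i) (φ i)

theorem Real.le_two_mul_log_one_add {x : ℝ} (h0 : 0 ≤ x) (h2 : x ≤ 2) :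
    x ≤ 2 * Real.log (1 + x) := by
  have hlog := Real.le_log_one_add_of_nonneg h0
  rw [div_le_iff₀ (by linarith)] at hlog
  nlinarith

namespace Matrix

variable {m : Type*} [DecidableEq m]

theorem det_add_vecMulVec [Fintype m] {R : Type*} [CommRing R] {A : Matrix m m R}
    (hA : IsUnit A.det) (u v : m → R) :
    (A + vecMulVec u v).det = A.det * (1 + v ⬝ᵥ A⁻¹ *ᵥ u) := by
  have hfactor : A + vecMulVec u v = A * (1 + vecMulVec (A⁻¹ *ᵥ u) v) := by
    rw [Matrix.mul_add, Matrix.mul_one, mul_vecMulVec, mulVec_mulVec,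
      mul_nonsing_inv A hA, one_mulVec]
  rw [hfactor, det_mul, vecMulVec_eq Unit, det_one_add_replicateCol_mul_replicateRow]

theorem posDef_of_posSemidef_sub_smul_one {A : Matrix m m ℝ} {lam : ℝ} (hlam : 0 < lam)
    (hA : (A - lam • 1).PosSemidef) : A.PosDef := by
  simpa using (PosDef.one.smul hlam).add_posSemidef hA

/-- With `ψ = A⁻¹v` and `q = vᵀψ = ψᵀAψ ≥ λ‖ψ‖²`, Cauchy–Schwarz gives
`q² ≤ ‖v‖²‖ψ‖² ≤ λ‖ψ‖² ≤ q`. -/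
theorem dotProduct_inv_mulVec_le_one [Fintype m] {A : Matrix m m ℝ} {lam : ℝ}
    (hlam : 0 < lam) (hA : (A - lam • 1).PosSemidef) {v : m → ℝ} (hv : v ⬝ᵥ v ≤ lam) :
    v ⬝ᵥ A⁻¹ *ᵥ v ≤ 1 := by
  set ψ := A⁻¹ *ᵥ v
  have hAψ : A *ᵥ ψ = v := by
    have hunit := (posDef_of_posSemidef_sub_smul_one hlam hA).det_pos.ne'.isUnit
    rw [mulVec_mulVec, mul_nonsing_inv A hunit, one_mulVec]
  have hψψ : 0 ≤ ψ ⬝ᵥ ψ := by simpa using dotProduct_self_star_nonneg ψ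
  have hgap : lam * (ψ ⬝ᵥ ψ) ≤ v ⬝ᵥ ψ := by
    have := hA.dotProduct_mulVec_nonneg ψ
    rw [star_trivial, sub_mulVec, dotProduct_sub, hAψ, smul_mulVec, one_mulVec,
      dotProduct_smul, smul_eq_mul, dotProduct_comm] at this
    linarith
  have hcs : (v ⬝ᵥ ψ) ^ 2 ≤ (v ⬝ᵥ v) * (ψ ⬝ᵥ ψ) := by
    simpa [dotProduct, sq] using Finset.sum_mul_sq_le_sq_mul_sq Finset.univ v ψ
  nlinarith [mul_le_mul_of_nonneg_right hv hψψ]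

end Matrix

section covMat

variable {p : ℕ} (lam : ℝ) (φ : ℕ → Fin p → ℝ)

theorem covMat_zero : covMat lam φ 0 = lam • 1 := by
  simp [covMat]

theorem covMat_succ (t : ℕ) :
    covMat lam φ (t + 1) = covMat lam φ t + vecMulVec (φ t) (φ t) := by
  rw [covMat, covMat, Finset.sum_range_succ, add_assoc]

theorem posSemidef_covMat_sub_smul_one (t : ℕ) : (covMat lam φ t - lam • 1).PosSemidef := by
  rw [covMat, add_sub_cancel_left]
  exact posSemidef_sum _ fun i _ => by simpa using posSemidef_vecMulVec_self_star (φ i)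

variable {lam}

theorem det_covMat (hlam : 0 < lam) (n : ℕ) :
    (covMat lam φ n).det =
      (lam • (1 : Matrix (Fin p) (Fin p) ℝ)).det *
        ∏ t ∈ Finset.range n, (1 + φ t ⬝ᵥ (covMat lam φ t)⁻¹ *ᵥ φ t) := by
  induction n with
  | zero => simp [covMat_zero]
  | succ n ih =>
    have hunit := (posDef_of_posSemidef_sub_smul_one hlam
      (posSemidef_covMat_sub_smul_one lam φ n)).det_pos.ne'.isUnit
    rw [covMat_succ, det_add_vecMulVec hunit, ih, Finset.prod_range_succ, mul_assoc]

end covMat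

/-- Elliptical potential lemma: if `λ ≥ max{1, B²}` and `‖φₜ‖₂ ≤ B`, then
`Σₜ ‖φₜ‖²_{Λₜ₋₁⁻¹} ≤ 2 log(det Λₙ / det(λI))`. -/
theorem elliptical_potential {p : ℕ} (n : ℕ) (lam B : ℝ)
    (hlam : max 1 (B ^ 2) ≤ lam)
    (φ : ℕ → Fin p → ℝ) (hφ : ∀ t, Real.sqrt (∑ j, (φ t j) ^ 2) ≤ B) :
    ∑ t ∈ Finset.range n, φ t ⬝ᵥ (covMat lam φ t)⁻¹.mulVec (φ t) ≤
      2 * Real.log ((covMat lam φ n).det /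
        (lam • (1 : Matrix (Fin p) (Fin p) ℝ)).det) := by
  obtain ⟨hlam1, hBlam⟩ := max_le_iff.mp hlam
  have hlam0 : 0 < lam := one_pos.trans_le hlam1
  have hPSD := posSemidef_covMat_sub_smul_one lam φ
  have hφlam (t : ℕ) : φ t ⬝ᵥ φ t ≤ lam := by
    have := (Real.sqrt_le_iff.mp (hφ t)).2
    simp only [dotProduct, ← sq]
    linarith
  have hpot_nonneg (t : ℕ) : 0 ≤ φ t ⬝ᵥ (covMat lam φ t)⁻¹ *ᵥ φ t := by
    simpa using (posDef_of_posSemidef_sub_smul_one hlam0 (hPSD t)).inv.posSemidef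
      |>.dotProduct_mulVec_nonneg (φ t)
  have hpot_le_one (t : ℕ) : φ t ⬝ᵥ (covMat lam φ t)⁻¹ *ᵥ φ t ≤ 1 :=
    dotProduct_inv_mulVec_le_one hlam0 (hPSD t) (hφlam t)
  rw [det_covMat φ hlam0, mul_div_cancel_left₀ _ ((PosDef.one.smul hlam0).det_pos.ne'),
    Real.log_prod fun t _ => by linarith [hpot_nonneg t], Finset.mul_sum]
  exact Finset.sum_le_sum fun t _ =>
    Real.le_two_mul_log_one_add (hpot_nonneg t) (by linarith [hpot_le_one t])
end

section
/- Let L : ℝ → ℝ be defined by L(u) = f(u) − β·w(u) and U(u) = f(u) + β·w(u) where w(u) ≥ 0 and β ≥ 0, and suppose L(u) ≤ h(u) ≤ U(u) for all u in a finite set S (the confidence bounds are valid). If â maximizes L over S and a* maximizes h over S, then h(a*) − h(â) ≤ U(a*) − L(a*) = 2β·w(a*). -/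
/-- Pessimism argument: under valid confidence bounds `L ≤ h ≤ U` with
`L = f − βw`, `U = f + βw`, the sub-optimality of the LCB-greedy action is at
most the confidence width `2βw(a*)` at the optimal action. -/
theorem pessimism_suboptimality {α : Type*} (S : Finset α) (f w h : α → ℝ)
    (β : ℝ) (hβ : 0 ≤ β) (hw : ∀ u ∈ S, 0 ≤ w u)
    (hconf : ∀ u ∈ S, f u - β * w u ≤ h u ∧ h u ≤ f u + β * w u)
    (ahat astar : α) (hahatS : ahat ∈ S) (hastarS : astar ∈ S)
    (hahat : ∀ u ∈ S, f u - β * w u ≤ f ahat - β * w ahat)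
    (hastar : ∀ u ∈ S, h u ≤ h astar) :
    h astar - h ahat ≤ (f astar + β * w astar) - (f astar - β * w astar) ∧
      (f astar + β * w astar) - (f astar - β * w astar) = 2 * β * w astar := by
  constructor
  · have h1 := (hconf astar hastarS).2
    have h2 := (hconf ahat hahatS).1
    have h3 := hahat astar hastarS
    linarith
  · ring
end
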